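/- arXiv:2509.17603 — 3 statements merged into one kernel-verified Lean document; each statement's English description precedes it below -/
import Mathlib

section
/- Let h be analytic on the unit disk with h(0) = 0, h'(0) = 1, and suppose that for every ζ ∈ 𝔻, |(1-|ζ|²) h''(ζ)/h'(ζ) - 2 conj(ζ)| ≤ 2γ for some constant γ ≥ 1. Then |h'(ζ)| ≤ (1+|ζ|)^{γ-1} / (1-|ζ|)^{γ+1} for all ζ ∈ 𝔻. -/
/-!
The hypothesis bounds the logarithmic derivative of `h'`:
`|h''/h'|(z) ≤ (2γ + 2|z|) / (1 - |z|²) = (γ + 1)/(1 - |z|) + (γ - 1)/(1 + |z|)`.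
Along the radius `t ↦ tζ` the derivative of `log |h'(tζ)|` is at most `|ζ| |h''/h'|(tζ)`, and integrating
the bound from `0` to `|ζ|` gives `log |h'(ζ)| ≤ (γ - 1) log (1 + |ζ|) - (γ + 1) log (1 - |ζ|)`, since
`h'(0) = 1`.
-/

open Complex Metric Set

open scoped RealInnerProductSpace

theorem HasDerivAt.log_norm {E : Type*} [NormedAddCommGroup E] [InnerProductSpace ℝ E]
    {g : ℝ → E} {g' : E} {t : ℝ} (hg : HasDerivAt g g' t) (hne : g t ≠ 0) :
    HasDerivAt (fun s => Real.log ‖g s‖) (⟪g t, g'⟫ / ‖g t‖ ^ 2) t := by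
  have hsq := hg.norm_sq.log (pow_ne_zero 2 (norm_ne_zero_iff.mpr hne))
  have hhalf : (fun s => Real.log ‖g s‖) = fun s => 1 / 2 * Real.log (‖g s‖ ^ 2) := by
    funext s
    rw [Real.log_pow]
    push_cast
    ring
  rw [hhalf]
  exact (hsq.const_mul (1 / 2)).congr_deriv (by ring)

theorem log_norm_sub_le_of_norm_deriv_le {E : Type*} [NormedAddCommGroup E]
    [InnerProductSpace ℝ E] {g g' : ℝ → E} {φ φ' : ℝ → ℝ} {a b : ℝ} (hab : a ≤ b)
    (hg : ∀ t ∈ Icc a b, HasDerivAt g (g' t) t) (hφ : ∀ t ∈ Icc a b, HasDerivAt φ (φ' t) t)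
    (hne : ∀ t ∈ Icc a b, g t ≠ 0) (hbound : ∀ t ∈ Icc a b, ‖g' t‖ ≤ φ' t * ‖g t‖) :
    Real.log ‖g b‖ - Real.log ‖g a‖ ≤ φ b - φ a := by
  set ψ : ℝ → ℝ := fun t => φ t - Real.log ‖g t‖
  have hψ : ∀ t ∈ Icc a b, HasDerivAt ψ (φ' t - ⟪g t, g' t⟫ / ‖g t‖ ^ 2) t :=
    fun t ht => (hφ t ht).sub ((hg t ht).log_norm (hne t ht))
  have hψ_nonneg : ∀ t ∈ Icc a b, 0 ≤ φ' t - ⟪g t, g' t⟫ / ‖g t‖ ^ 2 := by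
    intro t ht
    have hpos : 0 < ‖g t‖ := norm_pos_iff.mpr (hne t ht)
    rw [sub_nonneg, div_le_iff₀ (by positivity)]
    calc ⟪g t, g' t⟫ ≤ ‖g t‖ * ‖g' t‖ := real_inner_le_norm _ _
      _ ≤ ‖g t‖ * (φ' t * ‖g t‖) := by gcongr; exact hbound t ht
      _ = φ' t * ‖g t‖ ^ 2 := by ring
  have hmono : MonotoneOn ψ (Icc a b) :=
    monotoneOn_of_hasDerivWithinAt_nonneg (convex_Icc a b)
      (fun t ht => (hψ t ht).continuousAt.continuousWithinAt)
      (fun t ht => (hψ t (interior_subset ht)).hasDerivWithinAt)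
      (fun t ht => hψ_nonneg t (interior_subset ht))
  have hψab := hmono (left_mem_Icc.2 hab) (right_mem_Icc.2 hab) hab
  simp only [ψ] at hψab
  linarith

theorem log_norm_sub_le_of_norm_deriv_le_radial {f : ℂ → ℂ} {ρ ρ' : ℝ → ℝ} {R : ℝ}
    (hf : DifferentiableOn ℂ f (ball 0 R)) (hne : ∀ z ∈ ball 0 R, f z ≠ 0)
    (hρ : ∀ s ∈ Ico 0 R, HasDerivAt ρ (ρ' s) s)
    (hbound : ∀ z ∈ ball 0 R, ‖deriv f z‖ ≤ ρ' ‖z‖ * ‖f z‖) {ζ : ℂ} (hζ : ζ ∈ ball 0 R) :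
    Real.log ‖f ζ‖ - Real.log ‖f 0‖ ≤ ρ ‖ζ‖ - ρ 0 := by
  have hR : ‖ζ‖ < R := mem_ball_zero_iff.mp hζ
  have hnorm : ∀ t ∈ Icc (0 : ℝ) 1, ‖(t : ℂ) * ζ‖ = t * ‖ζ‖ := fun t ht => by
    rw [norm_mul, norm_real, Real.norm_of_nonneg ht.1]
  have hmem : ∀ t ∈ Icc (0 : ℝ) 1, (t : ℂ) * ζ ∈ ball 0 R := fun t ht => by
    rw [mem_ball_zero_iff, hnorm t ht]
    nlinarith [ht.2, norm_nonneg ζ]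
  have hf' : ∀ t ∈ Icc (0 : ℝ) 1,
      HasDerivAt (fun s : ℝ => f (s * ζ)) (deriv f (t * ζ) * ζ) t := fun t ht =>
    HasDerivAt.comp_ofReal (e := fun u => f (u * ζ))
      (((hf.differentiableAt (isOpen_ball.mem_nhds (hmem t ht))).hasDerivAt).comp (t : ℂ)
        (hasDerivAt_mul_const ζ))
  have hρ' : ∀ t ∈ Icc (0 : ℝ) 1,
      HasDerivAt (fun s => ρ (s * ‖ζ‖)) (ρ' (t * ‖ζ‖) * ‖ζ‖) t := fun t ht =>
    (hρ (t * ‖ζ‖) ⟨mul_nonneg ht.1 (norm_nonneg ζ), by nlinarith [ht.2, norm_nonneg ζ]⟩).comp t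
      (hasDerivAt_mul_const ‖ζ‖)
  have hsegment := log_norm_sub_le_of_norm_deriv_le zero_le_one hf' hρ'
    (fun t ht => hne _ (hmem t ht)) fun t ht => by
      have hpoint := hbound _ (hmem t ht)
      rw [hnorm t ht] at hpoint
      calc ‖deriv f (t * ζ) * ζ‖ = ‖deriv f (t * ζ)‖ * ‖ζ‖ := norm_mul _ _
        _ ≤ ρ' (t * ‖ζ‖) * ‖f (t * ζ)‖ * ‖ζ‖ := by gcongr
        _ = _ := by ring
  simpa using hsegment

theorem norm_le_of_norm_one_sub_sq_mul_sub_le {a z : ℂ} {c : ℝ} (hz : ‖z‖ < 1)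
    (h : ‖(1 - (‖z‖ : ℂ) ^ 2) * a - 2 * (starRingEnd ℂ) z‖ ≤ c) :
    ‖a‖ ≤ (c + 2 * ‖z‖) / (1 - ‖z‖ ^ 2) := by
  have hpos : 0 < 1 - ‖z‖ ^ 2 := by nlinarith [norm_nonneg z]
  have hcoef : ‖(1 - (‖z‖ : ℂ) ^ 2)‖ = 1 - ‖z‖ ^ 2 := by
    rw [show (1 - (‖z‖ : ℂ) ^ 2) = ((1 - ‖z‖ ^ 2 : ℝ) : ℂ) by push_cast; ring, norm_real,
      Real.norm_of_nonneg hpos.le]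
  have hconj : ‖2 * (starRingEnd ℂ) z‖ = 2 * ‖z‖ := by simp
  have htri := norm_sub_norm_le ((1 - (‖z‖ : ℂ) ^ 2) * a) (2 * (starRingEnd ℂ) z)
  rw [norm_mul, hcoef, hconj] at htri
  rw [le_div_iff₀ hpos]
  linarith

noncomputable def logGrowthBound (γ s : ℝ) : ℝ :=
  (γ - 1) * Real.log (1 + s) - (γ + 1) * Real.log (1 - s)

theorem logGrowthBound_zero (γ : ℝ) : logGrowthBound γ 0 = 0 := by
  simp [logGrowthBound]

theorem hasDerivAt_logGrowthBound (γ : ℝ) {s : ℝ} (hs : s ∈ Ioo (-1) 1) :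
    HasDerivAt (logGrowthBound γ) ((2 * γ + 2 * s) / (1 - s ^ 2)) s := by
  have hp : 0 < 1 + s := by linarith [hs.1]
  have hm : 0 < 1 - s := by linarith [hs.2]
  have hlog_p := (((hasDerivAt_id s).const_add 1).log hp.ne').const_mul (γ - 1)
  have hlog_m := (((hasDerivAt_id s).const_sub 1).log hm.ne').const_mul (γ + 1)
  refine (hlog_p.sub hlog_m).congr_deriv ?_
  rw [show 1 - s ^ 2 = (1 + s) * (1 - s) by ring, id]
  field_simp
  ring

theorem exp_logGrowthBound (γ : ℝ) {r : ℝ} (hr : r ∈ Ioo (-1) 1) :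
    Real.exp (logGrowthBound γ r) = (1 + r) ^ (γ - 1) / (1 - r) ^ (γ + 1) := by
  rw [Real.rpow_def_of_pos (by linarith [hr.1]), Real.rpow_def_of_pos (by linarith [hr.2]),
    ← Real.exp_sub, logGrowthBound]
  ring_nf

theorem deriv_growth_of_second_coeff_bound_general (h : ℂ → ℂ)
    (hh : DifferentiableOn ℂ h (ball (0 : ℂ) 1))
    (h1 : deriv h 0 = 1)
    (hne : ∀ ζ ∈ ball (0 : ℂ) 1, deriv h ζ ≠ 0)
    (γ : ℝ)
    (hA : ∀ ζ ∈ ball (0 : ℂ) 1,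
      ‖(1 - (‖ζ‖ : ℂ) ^ 2) * (deriv (deriv h) ζ / deriv h ζ) - 2 * (starRingEnd ℂ) ζ‖ ≤ 2 * γ) :
    ∀ ζ ∈ ball (0 : ℂ) 1,
      ‖deriv h ζ‖ ≤ (1 + ‖ζ‖) ^ (γ - 1) / (1 - ‖ζ‖) ^ (γ + 1) := by
  intro ζ hζ
  have hζ' : ‖ζ‖ ∈ Ioo (-1 : ℝ) 1 := ⟨by linarith [norm_nonneg ζ], mem_ball_zero_iff.mp hζ⟩
  have hlogDeriv : ∀ z ∈ ball (0 : ℂ) 1,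
      ‖deriv (deriv h) z‖ ≤ (2 * γ + 2 * ‖z‖) / (1 - ‖z‖ ^ 2) * ‖deriv h z‖ := by
    intro z hz
    rw [← div_le_iff₀ (norm_pos_iff.mpr (hne z hz)), ← norm_div]
    exact norm_le_of_norm_one_sub_sq_mul_sub_le (mem_ball_zero_iff.mp hz) (hA z hz)
  have hlog := log_norm_sub_le_of_norm_deriv_le_radial (hh.deriv isOpen_ball) hne
    (fun s hs => hasDerivAt_logGrowthBound γ ⟨by linarith [hs.1], hs.2⟩) hlogDeriv hζ
  rw [h1, norm_one, Real.log_one, logGrowthBound_zero, sub_zero, sub_zero] at hlog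
  rw [← exp_logGrowthBound γ hζ', ← Real.exp_log (norm_pos_iff.mpr (hne ζ hζ))]
  exact Real.exp_le_exp.mpr hlog

theorem deriv_growth_of_second_coeff_bound (h : ℂ → ℂ)
    (hh : DifferentiableOn ℂ h (ball (0 : ℂ) 1))
    (h0 : h 0 = 0) (h1 : deriv h 0 = 1)
    (hne : ∀ ζ ∈ ball (0 : ℂ) 1, deriv h ζ ≠ 0)
    (γ : ℝ) (hγ : 1 ≤ γ)
    (hA : ∀ ζ ∈ ball (0 : ℂ) 1,
      ‖(1 - (‖ζ‖ : ℂ) ^ 2) * (deriv (deriv h) ζ / deriv h ζ) - 2 * (starRingEnd ℂ) ζ‖ ≤ 2 * γ) :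
    ∀ ζ ∈ ball (0 : ℂ) 1,
      ‖deriv h ζ‖ ≤ (1 + ‖ζ‖) ^ (γ - 1) / (1 - ‖ζ‖) ^ (γ + 1) :=
  deriv_growth_of_second_coeff_bound_general h hh h1 hne γ hA
end

section
/- Let h, g be analytic on the unit disk with |h'(ζ)| ≤ (1+|ζ|)^{γ-1}/(1-|ζ|)^{γ+1} and |g'(ζ)| ≤ ((K-1)/(K+1)) (1+|ζ|)^{γ-1}/(1-|ζ|)^{γ+1} for all ζ, where γ ≥ 1, K ≥ 1. If f = h + conj(g) with f(0)=0, then |f(z)| ≤ (K/(γ(1+K))) [((1+|z|)/(1-|z|))^γ - 1] for all z in the disk. -/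
open Complex Metric Set

/-!
Along the radius `t ↦ t z` the derivative bound integrates exactly:
`(1 / (2γ)) ((1 + s) / (1 - s)) ^ γ` is a primitive of `(1 + s) ^ (γ - 1) / (1 - s) ^ (γ + 1)`.
The fencing form of the mean value inequality therefore bounds `‖h z‖` by
`(1 / (2γ)) (((1 + r) / (1 - r)) ^ γ - 1)` and `‖g z‖` by `(K - 1) / (K + 1)` times that, and
`‖f‖ ≤ ‖h‖ + ‖g‖` together with `1 + (K - 1) / (K + 1) = 2K / (K + 1)` gives the claim.
-/

lemma norm_sub_le_of_norm_deriv_le_radial {u : ℂ → ℂ} {R : ℝ} {φ Φ : ℝ → ℝ}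
    (hu : DifferentiableOn ℂ u (ball 0 R)) (hΦ : ∀ s ∈ Ico 0 R, HasDerivAt Φ (φ s) s)
    (hbound : ∀ ζ ∈ ball (0 : ℂ) R, ‖deriv u ζ‖ ≤ φ ‖ζ‖) {z : ℂ} (hz : z ∈ ball 0 R) :
    ‖u z - u 0‖ ≤ Φ ‖z‖ - Φ 0 := by
  have hzR : ‖z‖ < R := mem_ball_zero_iff.mp hz
  have hnorm : ∀ t ∈ Icc (0 : ℝ) 1, ‖(t : ℂ) * z‖ = t * ‖z‖ := fun t ht => by
    rw [norm_mul, norm_real, Real.norm_of_nonneg ht.1]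
  have hmem : ∀ t ∈ Icc (0 : ℝ) 1, t * ‖z‖ ∈ Ico 0 R := fun t ht =>
    ⟨by positivity [ht.1], (mul_le_of_le_one_left (norm_nonneg z) ht.2).trans_lt hzR⟩
  have hpath : ∀ t ∈ Icc (0 : ℝ) 1,
      HasDerivAt (fun t : ℝ => u (t * z) - u 0) (deriv u (t * z) * z) t := fun t ht => by
    have hut : DifferentiableAt ℂ u (t * z) :=
      hu.differentiableAt (isOpen_ball.mem_nhds (mem_ball_zero_iff.mpr
        ((hnorm t ht).trans_lt (hmem t ht).2)))
    simpa using
      (hut.hasDerivAt.comp t ((ofRealCLM.hasDerivAt (x := t)).mul_const z)).sub_const (u 0)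
  have hB : ∀ t ∈ Icc (0 : ℝ) 1,
      HasDerivAt (fun t : ℝ => Φ (t * ‖z‖) - Φ 0) (φ (t * ‖z‖) * ‖z‖) t := fun t ht => by
    simpa using ((hΦ _ (hmem t ht)).comp t ((hasDerivAt_id t).mul_const ‖z‖)).sub_const (Φ 0)
  have hfence := image_norm_le_of_norm_deriv_right_le_deriv_boundary'
    (f := fun t : ℝ => u (t * z) - u 0) (B := fun t : ℝ => Φ (t * ‖z‖) - Φ 0)
    (fun t ht => (hpath t ht).continuousAt.continuousWithinAt)
    (fun t ht => (hpath t (Ico_subset_Icc_self ht)).hasDerivWithinAt) (by simp)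
    (fun t ht => (hB t ht).continuousAt.continuousWithinAt)
    (fun t ht => (hB t (Ico_subset_Icc_self ht)).hasDerivWithinAt)
    (fun t ht => by
      have ht' := Ico_subset_Icc_self ht
      rw [norm_mul, ← hnorm t ht']
      exact mul_le_mul_of_nonneg_right (hbound _ (mem_ball_zero_iff.mpr
        ((hnorm t ht').trans_lt (hmem t ht').2))) (norm_nonneg z))
    (right_mem_Icc.mpr zero_le_one)
  simpa using hfence

lemma hasDerivAt_one_add_div_one_sub_rpow (γ : ℝ) {s : ℝ} (hs : s ∈ Ioo (-1) 1) :
    HasDerivAt (fun s : ℝ => ((1 + s) / (1 - s)) ^ γ)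
      (2 * γ * ((1 + s) ^ (γ - 1) / (1 - s) ^ (γ + 1))) s := by
  have hp : 0 < 1 + s := by linarith [hs.1]
  have hm : 0 < 1 - s := by linarith [hs.2]
  have hquot : HasDerivAt (fun s : ℝ => (1 + s) / (1 - s)) (2 / (1 - s) ^ 2) s := by
    refine (((hasDerivAt_id' s).const_add 1).div ((hasDerivAt_id' s).const_sub 1)
      hm.ne').congr_deriv ?_
    ring
  convert hquot.rpow_const (p := γ) (Or.inl (div_pos hp hm).ne') using 1
  rw [Real.div_rpow hp.le hm.le, show γ + 1 = (γ - 1) + 2 by ring, Real.rpow_add hm,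
    Real.rpow_two]
  have := (Real.rpow_pos_of_pos hm (γ - 1)).ne'
  field_simp

lemma norm_le_of_norm_deriv_le_rpow_bound {u : ℂ → ℂ} (hu : DifferentiableOn ℂ u (ball 0 1))
    (hu0 : u 0 = 0) {γ c : ℝ} (hγ : γ ≠ 0)
    (hbound : ∀ ζ ∈ ball (0 : ℂ) 1,
      ‖deriv u ζ‖ ≤ c * ((1 + ‖ζ‖) ^ (γ - 1) / (1 - ‖ζ‖) ^ (γ + 1)))
    {z : ℂ} (hz : z ∈ ball 0 1) :
    ‖u z‖ ≤ c / (2 * γ) * (((1 + ‖z‖) / (1 - ‖z‖)) ^ γ - 1) := by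
  have hΦ : ∀ s ∈ Ico (0 : ℝ) 1,
      HasDerivAt (fun s : ℝ => c / (2 * γ) * ((1 + s) / (1 - s)) ^ γ)
        (c * ((1 + s) ^ (γ - 1) / (1 - s) ^ (γ + 1))) s := fun s hs => by
    refine ((hasDerivAt_one_add_div_one_sub_rpow γ ⟨by linarith [hs.1], hs.2⟩).const_mul
      (c / (2 * γ))).congr_deriv ?_
    field_simp
  simpa [hu0, mul_sub] using norm_sub_le_of_norm_deriv_le_radial hu hΦ hbound hz

theorem growth_of_harmonic_KKprime (h g : ℂ → ℂ)
    (hh : DifferentiableOn ℂ h (ball (0 : ℂ) 1))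
    (hg : DifferentiableOn ℂ g (ball (0 : ℂ) 1))
    (h0 : h 0 = 0) (g0 : g 0 = 0)
    (γ K : ℝ) (hγ : 1 ≤ γ) (hK : 1 ≤ K)
    (hhd : ∀ ζ ∈ ball (0 : ℂ) 1,
      ‖deriv h ζ‖ ≤ (1 + ‖ζ‖) ^ (γ - 1) / (1 - ‖ζ‖) ^ (γ + 1))
    (hgd : ∀ ζ ∈ ball (0 : ℂ) 1,
      ‖deriv g ζ‖ ≤ (K - 1) / (K + 1) * ((1 + ‖ζ‖) ^ (γ - 1) / (1 - ‖ζ‖) ^ (γ + 1))) :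
    ∀ z ∈ ball (0 : ℂ) 1,
      ‖h z + (starRingEnd ℂ) (g z)‖ ≤
        K / (γ * (1 + K)) * (((1 + ‖z‖) / (1 - ‖z‖)) ^ γ - 1) := by
  intro z hz
  have hγ0 : γ ≠ 0 := by positivity
  have hK1 : K + 1 ≠ 0 := by positivity
  have bound_h := norm_le_of_norm_deriv_le_rpow_bound (c := 1) hh h0 hγ0
    (by simpa only [one_mul] using hhd) hz
  have bound_g := norm_le_of_norm_deriv_le_rpow_bound hg g0 hγ0 hgd hz
  calc ‖h z + (starRingEnd ℂ) (g z)‖ ≤ ‖h z‖ + ‖g z‖ :=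
        (norm_add_le _ _).trans_eq (by rw [RCLike.norm_conj])
    _ ≤ 1 / (2 * γ) * (((1 + ‖z‖) / (1 - ‖z‖)) ^ γ - 1)
        + (K - 1) / (K + 1) / (2 * γ) * (((1 + ‖z‖) / (1 - ‖z‖)) ^ γ - 1) :=
        add_le_add bound_h bound_g
    _ = K / (γ * (1 + K)) * (((1 + ‖z‖) / (1 - ‖z‖)) ^ γ - 1) := by
        field_simp
        ring
end

section
/- For the Poisson kernel on a disk of radius r, P_r(ξ, e^{iη}) = (r² - |ξ-z|²)/|re^{iη} - (ξ-z)|², the Wirtinger derivatives with respect to ξ satisfy |∂P_r/∂ξ| ≤ 10/r and |∂P_r/∂ξ̄| ≤ 10/r whenever |ξ - z| ≤ r/2. -/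
/-!
The Poisson kernel `P(x) = (r² - ‖x‖²) / ‖c - x‖²` with `‖c‖ = r` has gradient
`2 A / ‖c - x‖⁴`, where `A = (r² - ‖x‖²) (c - x) - ‖c - x‖² x`, and a short computation with
`‖c‖ = r` gives `‖A‖ = r ‖c - x‖²`. Hence `‖∇P(x)‖ = 2r / ‖c - x‖² ≤ 8 / r` as soon as
`‖x‖ ≤ r / 2`, since then `‖c - x‖ ≥ r / 2`. For a real-valued function both Wirtinger
derivatives have modulus at most the norm of the real derivative.
-/

open Complex

/-- The Wirtinger derivative `f_ξ = (f_x - i f_y)/2`. -/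
noncomputable def wirtingerDz (f : ℂ → ℂ) (z : ℂ) : ℂ :=
  (fderiv ℝ f z 1 - Complex.I * fderiv ℝ f z Complex.I) / 2

/-- The Wirtinger derivative `f_ξ̄ = (f_x + i f_y)/2`. -/
noncomputable def wirtingerDzbar (f : ℂ → ℂ) (z : ℂ) : ℂ :=
  (fderiv ℝ f z 1 + Complex.I * fderiv ℝ f z Complex.I) / 2

open ComplexConjugate

section RealValued

variable {g : ℂ → ℝ} {g' : ℂ →L[ℝ] ℝ} {ξ : ℂ}

theorem HasFDerivAt.ofReal_comp (hg : HasFDerivAt g g' ξ) :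
    HasFDerivAt (fun w => (g w : ℂ)) (ofRealCLM.comp g') ξ :=
  ofRealCLM.hasFDerivAt.comp ξ hg

theorem HasFDerivAt.wirtingerDz_ofReal (hg : HasFDerivAt g g' ξ) :
    wirtingerDz (fun w => (g w : ℂ)) ξ = ((g' 1 : ℂ) - I * g' I) / 2 := by
  simp [wirtingerDz, hg.ofReal_comp.fderiv]

theorem HasFDerivAt.wirtingerDzbar_ofReal (hg : HasFDerivAt g g' ξ) :
    wirtingerDzbar (fun w => (g w : ℂ)) ξ = conj (wirtingerDz (fun w => (g w : ℂ)) ξ) := by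
  simp [wirtingerDzbar, hg.wirtingerDz_ofReal, hg.ofReal_comp.fderiv, map_div₀, map_ofNat]

theorem HasFDerivAt.norm_wirtingerDz_ofReal_le (hg : HasFDerivAt g g' ξ) :
    ‖wirtingerDz (fun w => (g w : ℂ)) ξ‖ ≤ ‖g'‖ := by
  have h1 : |g' 1| ≤ ‖g'‖ := by simpa using g'.le_opNorm 1
  have hI : |g' I| ≤ ‖g'‖ := by simpa using g'.le_opNorm I
  rw [hg.wirtingerDz_ofReal, norm_div, RCLike.norm_ofNat]
  calc ‖(g' 1 : ℂ) - I * g' I‖ / 2 ≤ (|g' 1| + |g' I|) / 2 := by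
        gcongr
        refine (norm_sub_le _ _).trans_eq ?_
        simp
    _ ≤ ‖g'‖ := by linarith

theorem HasFDerivAt.norm_wirtingerDzbar_ofReal_le (hg : HasFDerivAt g g' ξ) :
    ‖wirtingerDzbar (fun w => (g w : ℂ)) ξ‖ ≤ ‖g'‖ := by
  rw [hg.wirtingerDzbar_ofReal, norm_conj]
  exact hg.norm_wirtingerDz_ofReal_le

end RealValued

section PoissonKernel

variable {E : Type*} [NormedAddCommGroup E] [InnerProductSpace ℝ E]

noncomputable def poissonGradient (r : ℝ) (c x : E) : E :=
  (2 / ‖c - x‖ ^ 4) • ((r ^ 2 - ‖x‖ ^ 2) • (c - x) - ‖c - x‖ ^ 2 • x)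

theorem hasFDerivAt_poissonKernel (r : ℝ) {c x : E} (hx : x ≠ c) :
    HasFDerivAt (fun y => (r ^ 2 - ‖y‖ ^ 2) / ‖c - y‖ ^ 2)
      (innerSL ℝ (poissonGradient r c x)) x := by
  have hD : ‖c - x‖ ^ 2 ≠ 0 := by simpa [sub_eq_zero] using hx.symm
  have hN := (hasFDerivAt_id x).norm_sq.const_sub (r ^ 2)
  have hinvD := (hasDerivAt_inv hD).comp_hasFDerivAt x ((hasFDerivAt_id x).const_sub c).norm_sq
  simp_rw [div_eq_mul_inv]
  refine (hN.mul hinvD).congr_fderiv ?_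
  ext v
  simp only [id_eq, map_sub, ContinuousLinearMap.comp_neg, ContinuousLinearMap.comp_id, neg_sub,
    neg_smul, smul_neg, Function.comp_apply, add_apply, neg_apply, smul_apply, sub_apply,
    coe_innerSL_apply, nsmul_eq_mul, Nat.cast_ofNat, smul_eq_mul, poissonGradient, map_smul]
  field_simp
  ring

theorem norm_poissonGradient {r : ℝ} (hr : 0 ≤ r) {c : E} (hc : ‖c‖ = r) (x : E) :
    ‖poissonGradient r c x‖ = 2 * r / ‖c - x‖ ^ 2 := by
  have hA : ‖(r ^ 2 - ‖x‖ ^ 2) • (c - x) - ‖c - x‖ ^ 2 • x‖ = r * ‖c - x‖ ^ 2 := by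
    rw [← sq_eq_sq₀ (norm_nonneg _) (by positivity), norm_sub_sq_real, norm_smul, norm_smul,
      real_inner_smul_left, real_inner_smul_right, mul_pow, mul_pow, Real.norm_eq_abs,
      Real.norm_eq_abs, sq_abs, sq_abs, inner_sub_left, real_inner_self_eq_norm_sq,
      norm_sub_sq_real, hc]
    ring
  rcases eq_or_ne (‖c - x‖ ^ 2) 0 with hD | hD
  · have hcx : c - x = 0 := by simpa using hD
    simp [poissonGradient, hcx]
  · rw [poissonGradient, norm_smul, hA, Real.norm_of_nonneg (by positivity)]
    field_simp

theorem norm_poissonGradient_le {r : ℝ} (hr : 0 < r) {c x : E} (hc : ‖c‖ = r)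
    (hx : ‖x‖ ≤ r / 2) : ‖poissonGradient r c x‖ ≤ 8 / r := by
  have hcx : r / 2 ≤ ‖c - x‖ := by linarith [norm_sub_norm_le c x]
  rw [norm_poissonGradient hr.le hc, div_le_div_iff₀ (by nlinarith) hr]
  nlinarith [mul_le_mul hcx hcx (by positivity) (norm_nonneg _)]

end PoissonKernel

theorem poisson_kernel_wirtinger_bound (z : ℂ) (r η : ℝ) (hr : 0 < r) :
    ∀ ξ : ℂ, ‖ξ - z‖ ≤ r / 2 →
      ‖wirtingerDz (fun w =>
          (((r ^ 2 - ‖w - z‖ ^ 2) / ‖(r : ℂ) * Complex.exp (η * Complex.I) - (w - z)‖ ^ 2 : ℝ) : ℂ)) ξ‖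
          ≤ 10 / r ∧
      ‖wirtingerDzbar (fun w =>
          (((r ^ 2 - ‖w - z‖ ^ 2) / ‖(r : ℂ) * Complex.exp (η * Complex.I) - (w - z)‖ ^ 2 : ℝ) : ℂ)) ξ‖
          ≤ 10 / r := by
  intro ξ hξ
  set c : ℂ := (r : ℂ) * Complex.exp (η * Complex.I)
  have hc : ‖c‖ = r := by simp [c, norm_exp_ofReal_mul_I, hr.le]
  have hξc : ξ - z ≠ c := by
    intro h
    linarith [h ▸ hξ, hc]
  have hP : HasFDerivAt (fun w => (r ^ 2 - ‖w - z‖ ^ 2) / ‖c - (w - z)‖ ^ 2)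
      (innerSL ℝ (poissonGradient r c (ξ - z))) ξ :=
    (hasFDerivAt_comp_sub z).2 (hasFDerivAt_poissonKernel r hξc)
  have hbound : ‖innerSL ℝ (poissonGradient r c (ξ - z))‖ ≤ 10 / r := by
    rw [innerSL_apply_norm]
    exact (norm_poissonGradient_le hr hc hξ).trans (by gcongr; norm_num)
  exact ⟨hP.norm_wirtingerDz_ofReal_le.trans hbound, hP.norm_wirtingerDzbar_ofReal_le.trans hbound⟩
end
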